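/- arXiv:2110.10120 — 8 statements merged into one kernel-verified Lean document; each statement's English description precedes it below -/
import Mathlib

section
/- Let A be a commutative ring and ϖ ∈ A. (i) If A → A' is a ϖ-complete arc cover, then the induced ring map A/ϖA → A'/ϖA' is an arc cover. (ii) Conversely, every arc cover A → A' is a ϖ-complete arc cover. -/
/-- A ring map `f : A →+* A'` is an arc cover if for every valuation ring `V` of Krull
dimension `≤ 1` and every ring map `A → V`, there are a faithfully flat map of valuation
rings `V → V'` and a map `A' → V'` making the square commute. -/
def IsArcCover {A A' : Type} [CommRing A] [CommRing A'] (f : A →+* A') : Prop :=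
  ∀ (V : Type) [CommRing V] [IsDomain V] [ValuationRing V],
    ringKrullDim V ≤ 1 →
    ∀ g : A →+* V,
      ∃ (V' : Type) (iR : CommRing V'),
        letI := iR
        ∃ (iD : IsDomain V'),
          letI := iD
          ∃ (_ : ValuationRing V') (h : V →+* V'),
            (letI := h.toAlgebra; Module.FaithfullyFlat V V') ∧
            ∃ k : A' →+* V', k.comp f = h.comp g

/-- A ring map `f : A →+* A'` is a `ϖ`-complete arc cover if the arc-cover lifting
condition holds for all rank `≤ 1` valuation rings that are complete for the adic
topology of the ideal generated by the image of `ϖ`. -/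
def IsCompleteArcCover {A A' : Type} [CommRing A] [CommRing A'] (ϖ : A) (f : A →+* A') : Prop :=
  ∀ (V : Type) [CommRing V] [IsDomain V] [ValuationRing V],
    ringKrullDim V ≤ 1 →
    ∀ g : A →+* V, IsAdicComplete (Ideal.span {g ϖ}) V →
      ∃ (V' : Type) (iR : CommRing V'),
        letI := iR
        ∃ (iD : IsDomain V'),
          letI := iD
          ∃ (_ : ValuationRing V') (h : V →+* V'),
            (letI := h.toAlgebra; Module.FaithfullyFlat V V') ∧
            ∃ k : A' →+* V', k.comp f = h.comp g


/-!
Modulo `ϖ`, a map `A ⧸ ϖ → V` composed with `A → A ⧸ ϖ` sends `ϖ` to `0`, and every ring is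
adically complete for the zero ideal; so the `ϖ`-complete lifting property applies, and the
resulting lift `A' → V'` kills `f ϖ`, hence factors through `A' ⧸ f ϖ`. The converse is immediate:
the complete arc cover condition only asks for lifts against fewer valuation rings.
-/

theorem Ideal.exists_comp_quotientMap_eq {A A' B : Type} [CommRing A] [CommRing A'] [CommRing B]
    {I : Ideal A} {J : Ideal A'} {f : A →+* A'} (hIJ : I ≤ J.comap f) {g : A ⧸ I →+* B}
    {k : A' →+* B} (hk : k.comp f = g.comp (Ideal.Quotient.mk I)) (hJ : J ≤ RingHom.ker k) :
    ∃ k' : A' ⧸ J →+* B, k'.comp (Ideal.quotientMap J f hIJ) = g := by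
  refine ⟨Ideal.Quotient.lift J k hJ, Ideal.Quotient.ringHom_ext (RingHom.ext fun a => ?_)⟩
  simp only [RingHom.comp_apply, Ideal.quotientMap_mk]
  exact RingHom.congr_fun hk a

theorem IsCompleteArcCover.isArcCover_quotientMap {A A' : Type} [CommRing A] [CommRing A']
    {ϖ : A} {f : A →+* A'} (hf : IsCompleteArcCover ϖ f)
    (hϖ : Ideal.span {ϖ} ≤ (Ideal.span {f ϖ}).comap f) :
    IsArcCover (Ideal.quotientMap (Ideal.span {f ϖ}) f hϖ) := by
  intro V _ _ _ hdim g
  have hg : g.comp (Ideal.Quotient.mk _) ϖ = 0 := by simp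
  have hcomplete : IsAdicComplete (Ideal.span {g.comp (Ideal.Quotient.mk _) ϖ}) V := by
    rw [hg, Ideal.span_singleton_eq_bot.mpr rfl]
    infer_instance
  obtain ⟨V', _, _, _, h, hflat, k, hk⟩ := hf V hdim _ hcomplete
  have hkϖ : k (f ϖ) = 0 := by simpa [hg] using RingHom.congr_fun hk ϖ
  have hker : Ideal.span {f ϖ} ≤ RingHom.ker k := Ideal.span_singleton_le_iff_mem _ |>.mpr hkϖ
  exact ⟨V', _, _, ‹_›, h, hflat, Ideal.exists_comp_quotientMap_eq (g := h.comp g) hϖ hk hker⟩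

theorem IsArcCover.isCompleteArcCover {A A' : Type} [CommRing A] [CommRing A'] {f : A →+* A'}
    (hf : IsArcCover f) (ϖ : A) : IsCompleteArcCover ϖ f :=
  fun V _ _ _ hdim g _ => hf V hdim g

theorem complete_arc_cover_mod_and_arc_cover_is_complete
    (A : Type) [CommRing A] (ϖ : A) (A' : Type) [CommRing A'] (f : A →+* A') :
    (IsCompleteArcCover ϖ f →
      IsArcCover (Ideal.quotientMap (I := Ideal.span {ϖ}) (Ideal.span {f ϖ}) f
        (by rw [Ideal.span_le, Set.singleton_subset_iff]
            exact Ideal.mem_comap.mpr (Ideal.subset_span rfl)))) ∧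
    (IsArcCover f → IsCompleteArcCover ϖ f) :=
  ⟨fun hf => hf.isArcCover_quotientMap _, fun hf => hf.isCompleteArcCover ϖ⟩
end

section
/- Let p be a prime, let (A, ϖ) be a perfectoid ring with tilt A♭, and let ϖ♭ ∈ A♭ be a tilt of ϖ. Then the ring homomorphism f : A♭ → A/ϖA given by taking the zeroth component A♭ → A/pA (Perfection.coeff 0) followed by the reduction A/pA → A/ϖA (note ϖ divides p) is surjective, and its kernel is the principal ideal of A♭ generated by ϖ♭. In particular f induces a ring isomorphism A♭/(ϖ♭) ≅ A/ϖA. -/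
/-- `(A, ϖ)` is a perfectoid ring. -/
structure IsPerfectoid (p : ℕ) (A : Type) [CommRing A] (ϖ : A) : Prop where
  pow_dvd : ϖ ^ p ∣ (p : A)
  complete : IsAdicComplete (Ideal.span {ϖ}) A
  char : CharP (A ⧸ Ideal.span {(p : A)}) p
  frobenius_surjective : ∀ x : A, ∃ y : A, x - y ^ p ∈ Ideal.span {ϖ ^ p}
  frobenius_injective : ∀ x y : A, x ^ p - y ^ p ∈ Ideal.span {ϖ ^ p} → x - y ∈ Ideal.span {ϖ}

/-- `ϖ♭` is a tilt of `ϖ`. -/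
def IsTilt (p : ℕ) [Fact p.Prime] (A : Type) [CommRing A]
    [CharP (A ⧸ Ideal.span {(p : A)}) p] (ϖ : A)
    (ϖb : Perfection (A ⧸ Ideal.span {(p : A)}) p) : Prop :=
  ∃ u : Aˣ, Perfection.coeff (A ⧸ Ideal.span {(p : A)}) p 0 ϖb =
    Ideal.Quotient.mk (Ideal.span {(p : A)}) ((u : A) * ϖ)

/-! Since `ϖ ∣ p`, reduction gives a ring map `Φ : A♭ → Perfection (A ⧸ ϖ)`, and `Φ` is
bijective. It is onto because the Teichmüller map of the `ϖ`-adically complete ring `A` lifts every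
element of `Perfection (A ⧸ ϖ)` to a compatible system of `p`-power roots in `A`. It is injective
because if `(b k)` lifts `x ∈ A♭` and every `b k` is divisible by `ϖ`, then `b k ^ p ^ k` tends
`ϖ`-adically to `0` with increments in `p ϖ ^ k A`, which forces `p ∣ b 0`.

Through `Φ`, the map `f` becomes the zeroth coefficient of `Perfection (A ⧸ ϖ)`, which is onto
since Frobenius is onto on `A ⧸ ϖ`. For its kernel, lift `Φ ϖ♭` and an `x` with `x₀ = 0` to
compatible systems `(w n)`, `(a n)` in `A`; as `ϖ ^ 2 ∣ p`, `w 0` is `ϖ` times a unit. Injectivity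
of Frobenius `A ⧸ ϖ → A ⧸ ϖ ^ p` gives `w n ∣ a n` for all `n`, and its surjectivity lets one
choose the quotients `t n` with `t (n + 1) ^ p ≡ t n` mod `ϖ`, so that `x = Φ ϖ♭ * (t n mod ϖ)`. -/

open Ideal Perfection

section Adic

variable {A : Type*} [CommRing A] {ϖ : A}

theorem sModEq_span_singleton_pow_iff {x y : A} {n : ℕ} :
    x ≡ y [SMOD (span {ϖ} ^ n • ⊤ : Ideal A)] ↔ ϖ ^ n ∣ x - y := by
  rw [SModEq.sub_mem, smul_eq_mul, mul_top, span_singleton_pow, mem_span_singleton]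

theorem IsHausdorff.eq_zero_of_forall_pow_dvd [IsHausdorff (span {ϖ}) A] {x : A}
    (h : ∀ n, ϖ ^ n ∣ x) : x = 0 :=
  IsHausdorff.haus ‹_› x fun n ↦ sModEq_span_singleton_pow_iff.mpr (by simpa using h n)

theorem IsPrecomplete.exists_mul_pow_dvd_sub [IsPrecomplete (span {ϖ}) A] {a : A} {c : ℕ → A}
    (hc : ∀ k, a * ϖ ^ k ∣ c (k + 1) - c k) : ∃ L, ∀ k, a * ϖ ^ k ∣ L - c k := by
  choose r hr using hc
  set U : ℕ → A := fun k ↦ ∑ j ∈ Finset.range k, ϖ ^ j * r j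
  have hcU : ∀ k, c k = c 0 + a * U k := by
    intro k
    induction k with
    | zero => simp [U]
    | succ k ih =>
      simp only [U, Finset.sum_range_succ] at ih ⊢
      linear_combination hr k + ih
  have hU : ∀ {m n}, m ≤ n → U m ≡ U n [SMOD (span {ϖ} ^ m • ⊤ : Ideal A)] := by
    intro m n hmn
    rw [sModEq_span_singleton_pow_iff]
    simp only [U, ← Finset.sum_range_add_sum_Ico _ hmn, sub_add_cancel_left, dvd_neg]
    exact Finset.dvd_sum fun j hj ↦ (pow_dvd_pow ϖ (Finset.mem_Ico.mp hj).1).mul_right _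
  obtain ⟨V, hV⟩ := IsPrecomplete.prec ‹_› hU
  refine ⟨c 0 + a * V, fun k ↦ ?_⟩
  obtain ⟨d, hd⟩ := sModEq_span_singleton_pow_iff.mp (hV k)
  exact ⟨-d, by linear_combination -hcU k - a * hd⟩

theorem IsAdicComplete.isUnit_one_add [IsAdicComplete (span {ϖ}) A] {r : A} (h : ϖ ∣ r) :
    IsUnit (1 + r) := by
  have := mem_jacobson_bot.mp (IsAdicComplete.le_jacobson_bot _ (mem_span_singleton.mpr h)) 1
  rwa [mul_one, add_comm] at this

theorem associated_of_dvd_sub_unit_mul [IsAdicComplete (span {ϖ}) A] {a c : A} {u : Aˣ}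
    (ha : ϖ ^ 2 ∣ a) (hc : a ∣ c - u * ϖ) : Associated c ϖ := by
  obtain ⟨e, rfl⟩ := ha
  obtain ⟨g, hg⟩ := hc
  obtain ⟨v, hv⟩ := IsAdicComplete.isUnit_one_add (dvd_mul_right ϖ (↑u⁻¹ * e * g))
  refine Associated.symm ⟨u * v, ?_⟩
  rw [Units.val_mul, hv]
  linear_combination -hg + ϖ ^ 2 * e * g * u.mul_inv

variable {p : ℕ} [Fact p.Prime]

theorem charP_quotient_span_of_dvd [CharP (A ⧸ span {(p : A)}) p] [IsAdicComplete (span {ϖ}) A]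
    (h : ϖ ∣ p) : CharP (A ⧸ span {ϖ}) p := by
  have : Nontrivial (A ⧸ span {(p : A)}) :=
    CharP.nontrivial_of_char_ne_one (Fact.out : p.Prime).one_lt.ne'
  have : Nontrivial A := (Ideal.Quotient.mk (span {(p : A)})).domain_nontrivial
  have hne : span {ϖ} ≠ ⊤ := fun htop ↦ by
    have := IsAdicComplete.le_jacobson_bot (span {ϖ})
    rw [htop, top_le_iff, jacobson_eq_top_iff] at this
    exact bot_ne_top this
  have := Ideal.Quotient.nontrivial_iff.mpr hne
  rw [CharP.charP_iff_prime_eq_zero Fact.out, ← map_natCast (Ideal.Quotient.mk (span {ϖ})),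
    Ideal.Quotient.eq_zero_iff_mem, mem_span_singleton]
  exact h

theorem natCast_dvd_of_pow_sub_dvd [IsAdicComplete (span {ϖ}) A] (hϖ : ϖ ∣ p) {b : ℕ → A}
    (hb : ∀ k, (p : A) ∣ b (k + 1) ^ p - b k) (hϖb : ∀ k, ϖ ∣ b k) : (p : A) ∣ b 0 := by
  obtain ⟨L, hL⟩ := IsPrecomplete.exists_mul_pow_dvd_sub (ϖ := ϖ) (a := (p : A))
    (c := fun k ↦ b k ^ p ^ k) fun k ↦ by
      have := dvd_sub_pow_of_dvd_sub (hb k) k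
      rw [← pow_mul, ← pow_succ', pow_succ'] at this
      exact (mul_dvd_mul_left _ (pow_dvd_pow_of_dvd hϖ k)).trans this
  have hL0 : L = 0 := IsHausdorff.eq_zero_of_forall_pow_dvd fun k ↦ by
    have h1 : ϖ ^ k ∣ L - b k ^ p ^ k := (dvd_mul_left _ _).trans (hL k)
    have h2 : ϖ ^ k ∣ b k ^ p ^ k :=
      (pow_dvd_pow ϖ (Nat.lt_pow_self (Fact.out : p.Prime).one_lt).le).trans
        (pow_dvd_pow_of_dvd (hϖb k) _)
    simpa using dvd_add h1 h2
  simpa [hL0] using hL 0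

end Adic

namespace Perfection

variable {p : ℕ} [Fact p.Prime] {A : Type*} [CommRing A] {ϖ : A}

theorem map_factor_mapMonoidHom {I J : Ideal A} [CharP (A ⧸ I) p] [CharP (A ⧸ J) p] (h : I ≤ J)
    (x : Perfection A p) :
    map p (Ideal.Quotient.factor h) (mapMonoidHom p (Ideal.Quotient.mk I) x) =
      mapMonoidHom p (Ideal.Quotient.mk J) x :=
  rfl

theorem map_factor_surjective {I J : Ideal A} [CharP (A ⧸ I) p] [CharP (A ⧸ J) p]
    [IsAdicComplete J A] (h : I ≤ J) : Function.Surjective (map p (Ideal.Quotient.factor h)) :=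
  fun y ↦ ⟨mapMonoidHom p (Ideal.Quotient.mk I) ((quotientMulEquiv p J).symm y),
    (map_factor_mapMonoidHom h _).trans ((quotientMulEquiv p J).apply_symm_apply y)⟩

theorem map_factor_injective [CharP (A ⧸ span {(p : A)}) p] [CharP (A ⧸ span {ϖ}) p]
    [IsAdicComplete (span {ϖ}) A] (hϖ : ϖ ∣ p) :
    Function.Injective
      (map p (Ideal.Quotient.factor (span_singleton_le_span_singleton.mpr hϖ))) := by
  refine (injective_iff_map_eq_zero _).mpr fun x hx ↦ Perfection.ext fun n ↦ ?_
  choose b hb using fun k ↦ Ideal.Quotient.mk_surjective (coeff _ p (n + k) x)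
  have hb0 : Ideal.Quotient.mk _ (b 0) = coeff _ p n x := hb 0
  rw [map_zero, ← hb0, Ideal.Quotient.eq_zero_iff_mem, mem_span_singleton]
  refine natCast_dvd_of_pow_sub_dvd hϖ (fun k ↦ ?_) (fun k ↦ ?_)
  · rw [← mem_span_singleton, ← Ideal.Quotient.mk_eq_mk_iff_sub_mem, map_pow, hb, hb]
    exact coeff_pow_p' x (n + k)
  · rw [← mem_span_singleton, ← Ideal.Quotient.eq_zero_iff_mem,
      ← Ideal.Quotient.factor_mk (span_singleton_le_span_singleton.mpr hϖ), hb, ← coeff_map, hx,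
      map_zero]

theorem mapMonoidHom_symm_quotientMulEquiv_map_factor [CharP (A ⧸ span {(p : A)}) p]
    [CharP (A ⧸ span {ϖ}) p] [IsAdicComplete (span {ϖ}) A] (hϖ : ϖ ∣ p)
    (x : Perfection (A ⧸ span {(p : A)}) p) :
    mapMonoidHom p (Ideal.Quotient.mk (span {(p : A)}) : A →* _)
      ((quotientMulEquiv p (span {ϖ})).symm
        (map p (Ideal.Quotient.factor (span_singleton_le_span_singleton.mpr hϖ)) x)) = x :=
  map_factor_injective hϖ <| (map_factor_mapMonoidHom _ _).trans
    (MulEquiv.apply_symm_apply (quotientMulEquiv p (span {ϖ})) _)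

end Perfection

section FrobeniusConditions

variable {p : ℕ} {A : Type*} [CommRing A] {ϖ : A}

theorem dvd_of_pow_dvd_pow_of_dvd (hfs : ∀ x : A, ∃ y : A, x - y ^ p ∈ span {ϖ ^ p})
    (hfi : ∀ x y : A, x ^ p - y ^ p ∈ span {ϖ ^ p} → x - y ∈ span {ϖ})
    {w c : A} (hw : w ∣ ϖ) (h : w ^ p ∣ c ^ p) : w ∣ c := by
  obtain ⟨d, hd⟩ := h
  obtain ⟨d', t, ht⟩ := (hfs d).imp fun _ ↦ mem_span_singleton.mp
  have hc : c ^ p - (w * d') ^ p ∈ span {ϖ ^ p} :=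
    mem_span_singleton.mpr ⟨w ^ p * t, by linear_combination hd + w ^ p * ht⟩
  obtain ⟨s, hs⟩ := mem_span_singleton.mp (hfi _ _ hc)
  obtain ⟨r, hr⟩ := hw
  exact ⟨d' + r * s, by linear_combination hs + s * hr⟩

theorem associated_coeffMonoidHom_pow {w : Perfection A p}
    (hw : Associated (coeffMonoidHom A p 0 w) ϖ) (n : ℕ) :
    Associated (coeffMonoidHom A p n w ^ p ^ n) ϖ := by
  simpa using hw

variable [Fact p.Prime]

theorem frobenius_quotient_surjective [CharP (A ⧸ span {ϖ}) p]
    (hfs : ∀ x : A, ∃ y : A, x - y ^ p ∈ span {ϖ ^ p}) :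
    Function.Surjective (frobenius (A ⧸ span {ϖ}) p) := by
  intro x
  obtain ⟨x, rfl⟩ := Ideal.Quotient.mk_surjective x
  obtain ⟨y, hy⟩ := hfs x
  refine ⟨Ideal.Quotient.mk _ y, ?_⟩
  rw [frobenius_def, ← map_pow, Ideal.Quotient.mk_eq_mk_iff_sub_mem, ← neg_mem_iff, neg_sub]
  exact span_singleton_le_span_singleton.mpr (dvd_pow_self ϖ (Fact.out : p.Prime).ne_zero) hy

/-- Dividing by `w` is only defined up to `w`-torsion; this lemma is what lets the quotients be
chosen compatibly with Frobenius. -/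
theorem exists_mul_eq_zero_mk_pow_eq [CharP (A ⧸ span {ϖ}) p]
    (hfs : ∀ x : A, ∃ y : A, x - y ^ p ∈ span {ϖ ^ p})
    (hfi : ∀ x y : A, x ^ p - y ^ p ∈ span {ϖ ^ p} → x - y ∈ span {ϖ})
    {w τ : A} {N : ℕ} (hN : 2 ≤ N) (hw : Associated (w ^ N) ϖ) (hτ : w ^ p * τ = 0) :
    ∃ σ, w * σ = 0 ∧ Ideal.Quotient.mk (span {ϖ}) σ ^ p = Ideal.Quotient.mk _ τ := by
  obtain ⟨M, rfl⟩ := Nat.exists_eq_add_of_le' hN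
  obtain ⟨σ₀, t, ht⟩ := (hfs τ).imp fun _ ↦ mem_span_singleton.mp
  have hwσ₀ : (w * σ₀) ^ p - 0 ^ p ∈ span {ϖ ^ p} := mem_span_singleton.mpr
    ⟨-(w ^ p * t), by
      rw [zero_pow (Fact.out : p.Prime).ne_zero]
      linear_combination hτ - w ^ p * ht⟩
  obtain ⟨h, hh⟩ := mem_span_singleton.mp (hfi _ _ hwσ₀)
  obtain ⟨v, hv⟩ := hw
  set z := w ^ (M + 1) * v * h
  have hz : ϖ ∣ z ^ p := by
    have hle : M + 2 ≤ (M + 1) * p := by nlinarith [(Fact.out : p.Prime).two_le]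
    refine (Associated.symm ⟨v, hv⟩).dvd.trans <| (pow_dvd_pow w hle).trans ?_
    rw [pow_mul]
    exact pow_dvd_pow_of_dvd ((dvd_mul_right _ _).mul_right h) p
  refine ⟨σ₀ - z, by linear_combination hh - h * hv, ?_⟩
  rw [map_sub, sub_pow_char, ← map_pow, ← map_pow,
    Ideal.Quotient.eq_zero_iff_mem.mpr (mem_span_singleton.mpr hz), sub_zero,
    Ideal.Quotient.mk_eq_mk_iff_sub_mem, mem_span_singleton]
  exact (dvd_pow_self ϖ (Fact.out : p.Prime).ne_zero).trans ⟨-t, by linear_combination -ht⟩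

theorem coeffMonoidHom_dvd_coeffMonoidHom (hfs : ∀ x : A, ∃ y : A, x - y ^ p ∈ span {ϖ ^ p})
    (hfi : ∀ x y : A, x ^ p - y ^ p ∈ span {ϖ ^ p} → x - y ∈ span {ϖ})
    {w a : Perfection A p} (hw : Associated (coeffMonoidHom A p 0 w) ϖ)
    (ha : ϖ ∣ coeffMonoidHom A p 0 a) (n : ℕ) :
    coeffMonoidHom A p n w ∣ coeffMonoidHom A p n a := by
  induction n with
  | zero => exact hw.dvd.trans ha
  | succ n ih =>
    have hwϖ : coeffMonoidHom A p (n + 1) w ∣ ϖ :=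
      (dvd_pow_self _ (pow_ne_zero _ (Fact.out : p.Prime).ne_zero)).trans
        (associated_coeffMonoidHom_pow hw (n + 1)).dvd
    refine dvd_of_pow_dvd_pow_of_dvd hfs hfi hwϖ ?_
    rwa [coeffMonoidHom_pow_p', coeffMonoidHom_pow_p']

theorem exists_coeffMonoidHom_succ_mul_eq [CharP (A ⧸ span {ϖ}) p]
    (hfs : ∀ x : A, ∃ y : A, x - y ^ p ∈ span {ϖ ^ p})
    (hfi : ∀ x y : A, x ^ p - y ^ p ∈ span {ϖ ^ p} → x - y ∈ span {ϖ})
    {w a : Perfection A p} (hw : Associated (coeffMonoidHom A p 0 w) ϖ)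
    (ha : ϖ ∣ coeffMonoidHom A p 0 a) {n : ℕ} {z : A}
    (hz : coeffMonoidHom A p n w * z = coeffMonoidHom A p n a) :
    ∃ z', coeffMonoidHom A p (n + 1) w * z' = coeffMonoidHom A p (n + 1) a ∧
      Ideal.Quotient.mk (span {ϖ}) z' ^ p = Ideal.Quotient.mk _ z := by
  obtain ⟨q, hq⟩ := coeffMonoidHom_dvd_coeffMonoidHom hfs hfi hw ha (n + 1)
  have hτ : coeffMonoidHom A p (n + 1) w ^ p * (z - q ^ p) = 0 := by
    rw [coeffMonoidHom_pow_p', mul_sub, hz, ← coeffMonoidHom_pow_p' w n, ← mul_pow, ← hq,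
      coeffMonoidHom_pow_p', sub_self]
  have hN : 2 ≤ p ^ (n + 1) :=
    (Fact.out : p.Prime).two_le.trans (Nat.le_self_pow (Nat.succ_ne_zero n) p)
  obtain ⟨σ, hσ, hσp⟩ :=
    exists_mul_eq_zero_mk_pow_eq hfs hfi hN (associated_coeffMonoidHom_pow hw (n + 1)) hτ
  refine ⟨q + σ, by rw [mul_add, hσ, add_zero, hq], ?_⟩
  rw [map_add, add_pow_char, hσp, map_sub, map_pow, add_sub_cancel]

theorem ker_coeff_zero_eq_span [CharP (A ⧸ span {ϖ}) p] [IsAdicComplete (span {ϖ}) A]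
    (hfs : ∀ x : A, ∃ y : A, x - y ^ p ∈ span {ϖ ^ p})
    (hfi : ∀ x y : A, x ^ p - y ^ p ∈ span {ϖ ^ p} → x - y ∈ span {ϖ})
    {w : Perfection A p} (hw : Associated (coeffMonoidHom A p 0 w) ϖ) :
    RingHom.ker (coeff (A ⧸ span {ϖ}) p 0) = span {quotientMulEquiv p (span {ϖ}) w} := by
  have hle : span {quotientMulEquiv p (span {ϖ}) w} ≤ RingHom.ker (coeff _ p 0) := by
    rw [span_le, Set.singleton_subset_iff, SetLike.mem_coe, RingHom.mem_ker,
      coeff_quotientMulEquiv, Ideal.Quotient.eq_zero_iff_mem, mem_span_singleton]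
    exact hw.symm.dvd
  refine le_antisymm (fun x hx ↦ ?_) hle
  set a := (quotientMulEquiv p (span {ϖ})).symm x
  have hax : ∀ n, Ideal.Quotient.mk _ (coeffMonoidHom A p n a) = coeff _ p n x := fun n ↦ by
    rw [← coeff_quotientMulEquiv, MulEquiv.apply_symm_apply]
  have ha : ϖ ∣ coeffMonoidHom A p 0 a := by
    rwa [RingHom.mem_ker, ← hax 0, Ideal.Quotient.eq_zero_iff_mem, mem_span_singleton] at hx
  have hstep : ∀ n z, ∃ z', coeffMonoidHom A p n w * z = coeffMonoidHom A p n a →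
      coeffMonoidHom A p (n + 1) w * z' = coeffMonoidHom A p (n + 1) a ∧
        Ideal.Quotient.mk (span {ϖ}) z' ^ p = Ideal.Quotient.mk _ z := fun n z ↦ by
    by_cases hz : coeffMonoidHom A p n w * z = coeffMonoidHom A p n a
    · exact (exists_coeffMonoidHom_succ_mul_eq hfs hfi hw ha hz).imp fun _ h _ ↦ h
    · exact ⟨0, fun h ↦ absurd h hz⟩
  choose g hg using hstep
  obtain ⟨t₀, ht₀⟩ := coeffMonoidHom_dvd_coeffMonoidHom hfs hfi hw ha 0
  let t : ℕ → A := fun n ↦ Nat.rec t₀ g n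
  have ht : ∀ n, coeffMonoidHom A p n w * t n = coeffMonoidHom A p n a := by
    intro n
    induction n with
    | zero => exact ht₀.symm
    | succ n ih => exact (hg n (t n) ih).1
  let y : Perfection (A ⧸ span {ϖ}) p :=
    ⟨fun n ↦ Ideal.Quotient.mk _ (t n), fun n ↦ (hg n (t n) (ht n)).2⟩
  refine mem_span_singleton.mpr ⟨y, Perfection.ext fun n ↦ ?_⟩
  rw [← hax n, ← ht n, map_mul, map_mul, coeff_quotientMulEquiv]
  rfl

end FrobeniusConditions

theorem tilt_mod_pi_iso
    (p : ℕ) [Fact p.Prime] (A : Type) [CommRing A] (ϖ : A)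
    [CharP (A ⧸ Ideal.span {(p : A)}) p]
    (hA : IsPerfectoid p A ϖ)
    (ϖb : Perfection (A ⧸ Ideal.span {(p : A)}) p)
    (hϖb : IsTilt p A ϖ ϖb) :
    Function.Surjective
      ((Ideal.Quotient.factor (S := Ideal.span {(p : A)}) (T := Ideal.span {ϖ})
          (Ideal.span_le.mpr (Set.singleton_subset_iff.mpr (Ideal.mem_span_singleton.mpr
            ((dvd_pow_self ϖ (Fact.out : p.Prime).ne_zero).trans hA.pow_dvd))))).comp
        (Perfection.coeff (A ⧸ Ideal.span {(p : A)}) p 0)) ∧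
    RingHom.ker
      ((Ideal.Quotient.factor (S := Ideal.span {(p : A)}) (T := Ideal.span {ϖ})
          (Ideal.span_le.mpr (Set.singleton_subset_iff.mpr (Ideal.mem_span_singleton.mpr
            ((dvd_pow_self ϖ (Fact.out : p.Prime).ne_zero).trans hA.pow_dvd))))).comp
        (Perfection.coeff (A ⧸ Ideal.span {(p : A)}) p 0)) = Ideal.span {ϖb} ∧
    Nonempty ((Perfection (A ⧸ Ideal.span {(p : A)}) p ⧸ Ideal.span {ϖb}) ≃+*
      (A ⧸ Ideal.span {ϖ})) := by
  have hϖ2 : ϖ ^ 2 ∣ (p : A) := (pow_dvd_pow ϖ (Fact.out : p.Prime).two_le).trans hA.pow_dvd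
  have hϖ : ϖ ∣ (p : A) := (dvd_pow_self ϖ two_ne_zero).trans hϖ2
  have := hA.complete
  have := charP_quotient_span_of_dvd hϖ
  set Φ := Perfection.map p (Ideal.Quotient.factor (span_singleton_le_span_singleton.mpr hϖ))
  have hΦ : Function.Bijective Φ := ⟨map_factor_injective hϖ, map_factor_surjective _⟩
  have hf : ∀ h, (Ideal.Quotient.factor h).comp (coeff (A ⧸ span {(p : A)}) p 0) =
      (coeff _ p 0).comp Φ := fun h ↦
    RingHom.ext fun x ↦ (coeff_map p (Ideal.Quotient.factor h) x 0).symm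
  rw [hf]
  obtain ⟨u, hu⟩ := hϖb
  set w := (quotientMulEquiv p (span {ϖ})).symm (Φ ϖb)
  have hw : Associated (coeffMonoidHom A p 0 w) ϖ := by
    refine associated_of_dvd_sub_unit_mul (u := u) hϖ2 ?_
    have := congrArg (coeff _ p 0) (mapMonoidHom_symm_quotientMulEquiv_map_factor hϖ ϖb)
    rwa [coeff_mapMonoidHom, MonoidHom.coe_coe, hu, Ideal.Quotient.mk_eq_mk_iff_sub_mem,
      mem_span_singleton] at this
  have hsurj : Function.Surjective ((coeff _ p 0).comp Φ) :=
    (coeff_surjective (frobenius_quotient_surjective hA.frobenius_surjective) 0).comp hΦ.2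
  have hker : RingHom.ker ((coeff _ p 0).comp Φ) = span {ϖb} := by
    rw [← RingHom.comap_ker, ker_coeff_zero_eq_span hA.frobenius_surjective
      hA.frobenius_injective hw, MulEquiv.apply_symm_apply]
    conv_rhs => rw [← comap_map_of_bijective Φ hΦ (I := span {ϖb})]
    rw [map_span, Set.image_singleton]
  exact ⟨hsurj, hker,
    ⟨(quotEquivOfEq hker.symm).trans (RingHom.quotientKerEquivOfSurjective hsurj)⟩⟩
end

section
/- Let p be a prime and let (A, ϖ) be a perfectoid ring. Then there exist a unit v ∈ A× and an element π ∈ A such that π^p = v·p and A is π-adically complete; consequently the localizations A[1/π] and A[1/p] coincide (the canonical map between them is an isomorphism). -/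
/-!
Write `p = ϖ ^ p * a`. Using surjectivity of Frobenius modulo `ϖ ^ p`, one solves
`t ^ p ≡ a * (1 + ϖ * s)` modulo `ϖ ^ (p * k)` for every `k`, each solution refining the previous
one by multiples of `ϖ ^ k`; by `ϖ`-adic completeness the limits give `t ^ p = a * (1 + ϖ * s)`
exactly. Then `π = ϖ * t` satisfies `π ^ p = (1 + ϖ * s) * p`, and `1 + ϖ * s` is a unit since `ϖ`
lies in the Jacobson radical. As `ϖ ∣ π`, `π`-adic Cauchy series can be summed `ϖ`-adically, so `A`
is `π`-adically complete; and `π ^ p` is associated to `p`, so inverting `π` is inverting `p`.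
-/

namespace Ideal

variable {A : Type*} [CommRing A] {ϖ π : A}

theorem smodEq_span_singleton_pow_iff {x y : A} {n : ℕ} :
    x ≡ y [SMOD (span {ϖ} ^ n • ⊤ : Submodule A A)] ↔ ϖ ^ n ∣ x - y := by
  rw [SModEq.sub_mem, smul_eq_mul, mul_top, span_singleton_pow, mem_span_singleton]

theorem isHausdorff_span_singleton_iff :
    IsHausdorff (span {ϖ}) A ↔ ∀ x : A, (∀ n : ℕ, ϖ ^ n ∣ x) → x = 0 := by
  simp only [isHausdorff_iff, smodEq_span_singleton_pow_iff, sub_zero]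

theorem isPrecomplete_span_singleton_iff :
    IsPrecomplete (span {ϖ}) A ↔
      ∀ f : ℕ → A, (∀ k, ϖ ^ k ∣ f (k + 1) - f k) → ∃ L, ∀ n, ϖ ^ n ∣ f n - L := by
  simp only [isPrecomplete_iff, smodEq_span_singleton_pow_iff]
  constructor
  · intro h f hf
    refine h f fun {m n} hmn => ?_
    induction n, hmn using Nat.le_induction with
    | base => simp
    | succ n hmn ih =>
      rw [← sub_add_sub_cancel _ (f n)]
      exact dvd_add ih (dvd_sub_comm.1 ((pow_dvd_pow ϖ hmn).trans (hf n)))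
  · intro h f hf
    exact h f fun k => dvd_sub_comm.1 (hf k.le_succ)

theorem isAdicComplete_span_singleton_of_dvd (h : IsAdicComplete (span {ϖ}) A) (hd : ϖ ∣ π) :
    IsAdicComplete (span {π}) A := by
  have hdn (n : ℕ) : ϖ ^ n ∣ π ^ n := pow_dvd_pow_of_dvd hd n
  have hH := isHausdorff_span_singleton_iff.1 h.toIsHausdorff
  have hP := isPrecomplete_span_singleton_iff.1 h.toIsPrecomplete
  refine
    { toIsHausdorff :=
        isHausdorff_span_singleton_iff.2 fun x hx => hH x fun n => (hdn n).trans (hx n)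
      toIsPrecomplete := isPrecomplete_span_singleton_iff.2 fun f hf => ?_ }
  choose c hc using hf
  -- The limit is `f 0 + ∑ π ^ j * c j`, the series summed `ϖ`-adically; its tail from `n` on
  -- is `π ^ n * s n`, where `s n` is the `ϖ`-adic sum of the shifted series `σ n`.
  set σ : ℕ → ℕ → A := fun n N => ∑ j ∈ Finset.range N, π ^ j * c (n + j)
  have hσ (n N : ℕ) : π ^ n * σ n N = f (n + N) - f n := by
    simp only [σ, Finset.mul_sum, ← mul_assoc, ← pow_add, ← hc]
    exact Finset.sum_range_sub (fun j => f (n + j)) N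
  have hσ_lim (n : ℕ) : ∃ s, ∀ N, ϖ ^ N ∣ σ n N - s := by
    refine hP (σ n) fun N => ?_
    rw [show σ n (N + 1) - σ n N = π ^ N * c (n + N) by simp [σ, Finset.sum_range_succ]]
    exact (hdn N).mul_right _
  choose s hs using hσ_lim
  have htail (n : ℕ) : f n + π ^ n * s n = f 0 + s 0 := by
    rw [← sub_eq_zero]
    refine hH _ fun N => ?_
    have hσ0 : σ 0 (n + N) = f (n + N) - f 0 := by simpa using hσ 0 (n + N)
    have hdecomp : f n + π ^ n * s n - (f 0 + s 0) =
        (σ 0 (n + N) - s 0) - π ^ n * (σ n N - s n) := by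
      linear_combination (hσ n N) - hσ0
    rw [hdecomp]
    exact dvd_sub ((pow_dvd_pow ϖ (Nat.le_add_left N n)).trans (hs 0 (n + N)))
      ((hs n N).mul_left _)
  exact ⟨f 0 + s 0, fun n => ⟨-s n, by linear_combination htail n⟩⟩

end Ideal

theorem IsAdicComplete.isUnit_one_add_mul {A : Type*} [CommRing A] {ϖ : A}
    (h : IsAdicComplete (Ideal.span {ϖ}) A) (x : A) : IsUnit (1 + ϖ * x) := by
  have hϖ := IsAdicComplete.le_jacobson_bot _ (Ideal.mem_span_singleton_self ϖ)
  simpa only [add_comm] using Ideal.mem_jacobson_bot.1 hϖ x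

theorem IsLocalization.Away.of_pow {R S : Type*} [CommSemiring R] [CommSemiring S] [Algebra R S]
    {x : R} {n : ℕ} (hn : n ≠ 0) [IsLocalization.Away (x ^ n) S] : IsLocalization.Away x S := by
  refine IsLocalization.of_le_of_exists_dvd (Submonoid.powers (x ^ n)) _ ?_ ?_
  · rintro _ ⟨k, rfl⟩
    exact ⟨n * k, pow_mul x n k⟩
  · rintro _ ⟨k, rfl⟩
    refine ⟨(x ^ n) ^ k, ⟨k, rfl⟩, ?_⟩
    rw [← pow_mul]
    exact pow_dvd_pow x (Nat.le_mul_of_pos_left k (Nat.pos_of_ne_zero hn))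

section ApproximateRoots

variable {A : Type*} [CommRing A] {p : ℕ} {ϖ a : A}

/-- Correcting `t` by `ϖ ^ k * e` with `e ^ p ≡ -f` mod `ϖ ^ p`, where `ϖ ^ (p * k) * f` is the
error, cancels the error to the next order; the binomial cross term `p * t * ϖ ^ k * e * _` is
absorbed into the correction of `s` because `p = ϖ ^ p * a`. -/
theorem exists_approx_root_succ (hp : p.Prime) (ha : (p : A) = ϖ ^ p * a)
    (hfrob : ∀ x : A, ∃ y : A, x - y ^ p ∈ Ideal.span {ϖ ^ p}) {k : ℕ} {t s : A}
    (h : ϖ ^ (p * k) ∣ t ^ p - a * (1 + ϖ * s)) :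
    ∃ e r : A, ϖ ^ (p * (k + 1)) ∣ (t + ϖ ^ k * e) ^ p - a * (1 + ϖ * (s + ϖ ^ k * r)) := by
  obtain ⟨f, hf⟩ := h
  obtain ⟨e, he⟩ := hfrob (-f)
  obtain ⟨g, hg⟩ := Ideal.mem_span_singleton.1 he
  obtain ⟨r, hr⟩ := exists_add_pow_prime_eq hp t (ϖ ^ k * e)
  have hϖ : ϖ * ϖ ^ (p - 1) = ϖ ^ p := by rw [← pow_succ', Nat.sub_add_cancel hp.one_le]
  refine ⟨e, ϖ ^ (p - 1) * t * e * r, -g, ?_⟩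
  linear_combination
    hr + hf - ϖ ^ (p * k) * hg + (t * ϖ ^ k * e * r) * ha - (a * ϖ ^ k * t * e * r) * hϖ

theorem exists_pow_eq_mul_one_add_mul (hp : p.Prime) (hc : IsAdicComplete (Ideal.span {ϖ}) A)
    (ha : (p : A) = ϖ ^ p * a) (hfrob : ∀ x : A, ∃ y : A, x - y ^ p ∈ Ideal.span {ϖ ^ p}) :
    ∃ t s : A, t ^ p = a * (1 + ϖ * s) := by
  choose! e r hstep using fun k t s =>
    exists_approx_root_succ (k := k) (t := t) (s := s) hp ha hfrob
  let u : ℕ → A × A := fun k => Nat.rec (0, 0)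
    (fun k x => (x.1 + ϖ ^ k * e k x.1 x.2, x.2 + ϖ ^ k * r k x.1 x.2)) k
  have hu (k : ℕ) : ϖ ^ (p * k) ∣ (u k).1 ^ p - a * (1 + ϖ * (u k).2) := by
    induction k with
    | zero => simp
    | succ k ih => exact hstep k _ _ ih
  have hP := Ideal.isPrecomplete_span_singleton_iff.1 hc.toIsPrecomplete
  obtain ⟨t, ht⟩ := hP (fun k => (u k).1) fun k => ⟨e k (u k).1 (u k).2, add_sub_cancel_left _ _⟩
  obtain ⟨s, hs⟩ := hP (fun k => (u k).2) fun k => ⟨r k (u k).1 (u k).2, add_sub_cancel_left _ _⟩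
  refine ⟨t, s, sub_eq_zero.1 <| Ideal.isHausdorff_span_singleton_iff.1 hc.toIsHausdorff _
    fun N => ?_⟩
  have hdecomp : t ^ p - a * (1 + ϖ * s) = ((u N).1 ^ p - a * (1 + ϖ * (u N).2))
      - ((u N).1 ^ p - t ^ p) + a * ϖ * ((u N).2 - s) := by ring
  rw [hdecomp]
  exact dvd_add (dvd_sub ((pow_dvd_pow ϖ (Nat.le_mul_of_pos_left N hp.pos)).trans (hu N))
    ((ht N).trans (sub_dvd_pow_sub_pow _ _ p))) ((hs N).mul_left _)

end ApproximateRoots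

theorem exists_p_power_root_uniformizer
    (p : ℕ) [Fact p.Prime] (A : Type) [CommRing A] (ϖ : A)
    (hA : IsPerfectoid p A ϖ) :
    ∃ (v : Aˣ) (π : A), π ^ p = (v : A) * (p : A) ∧
      IsAdicComplete (Ideal.span {π}) A ∧
      IsLocalization.Away π (Localization.Away (p : A)) := by
  have hp : p.Prime := Fact.out
  obtain ⟨a, ha⟩ := hA.pow_dvd
  obtain ⟨t, s, hts⟩ :=
    exists_pow_eq_mul_one_add_mul hp hA.complete ha hA.frobenius_surjective
  have hu := hA.complete.isUnit_one_add_mul s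
  have hπ : (ϖ * t) ^ p = hu.unit * (p : A) := by
    rw [mul_pow, hts, hu.unit_spec, ha]
    ring
  refine ⟨hu.unit, ϖ * t, hπ,
    Ideal.isAdicComplete_span_singleton_of_dvd hA.complete (dvd_mul_right ϖ t), ?_⟩
  have : IsLocalization.Away ((ϖ * t) ^ p) (Localization.Away (p : A)) :=
    IsLocalization.Away.of_associated ⟨hu.unit, by rw [hπ, mul_comm]⟩
  exact IsLocalization.Away.of_pow hp.ne_zero
end

section
/- Let V be a valuation ring whose fraction field is algebraically closed. Then V is a henselian local ring and its residue field is algebraically closed (in particular V is strictly henselian). -/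
/-!
A valuation ring is integrally closed, so every root in the algebraically closed fraction field of
a monic polynomial over `V` already lies in `V`: monic polynomials over `V` split into linear
factors. Henselianity follows because the maximal ideal is prime, so a value `f(a₀) = ∏ (a₀ - rᵢ)`
in it forces some root `rᵢ` to be congruent to `a₀`; and a monic polynomial over the residue field
is the reduction of a monic polynomial over `V`, so it splits as well.
-/

open Polynomial

theorem Polynomial.Monic.splits_of_isAlgClosed_fractionRing {R : Type*} [CommRing R] [IsDomain R]
    [IsIntegrallyClosed R] [IsAlgClosed (FractionRing R)] {f : R[X]} (hf : f.Monic) : f.Splits :=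
  (IsAlgClosed.splits _).of_splits_map_of_injective (IsFractionRing.injective R _) fun _ hx ↦
    IsIntegrallyClosed.isIntegral_iff.mp ⟨f, hf, (eval₂_eq_eval_map _).trans <|
      (mem_roots (hf.map (algebraMap R (FractionRing R))).ne_zero).mp hx⟩

theorem Polynomial.Splits.exists_isRoot_sub_mem {R : Type*} [CommRing R] {f : R[X]} (hf : f.Splits)
    (hm : f.Monic) {P : Ideal R} [P.IsPrime] {a : R} (ha : f.eval a ∈ P) :
    ∃ r, f.IsRoot r ∧ r - a ∈ P := by
  obtain ⟨s, hs⟩ := splits_iff_exists_multiset.mp hf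
  rw [hm.leadingCoeff, C_1, one_mul] at hs
  have eval_eq (x : R) : f.eval x = (s.map (x - ·)).prod := by
    rw [hs, eval_multiset_prod, Multiset.map_map]
    simp
  rw [eval_eq] at ha
  obtain ⟨_, hmem, hP⟩ := (Ideal.IsPrime.multiset_prod_mem_iff_exists_mem ‹_› _).mp ha
  obtain ⟨r, hr, rfl⟩ := Multiset.mem_map.mp hmem
  refine ⟨r, ?_, by simpa using P.neg_mem hP⟩
  rw [IsRoot, eval_eq]
  exact Multiset.prod_eq_zero (Multiset.mem_map.mpr ⟨r, hr, sub_self r⟩)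

theorem HenselianLocalRing.of_forall_monic_splits (R : Type*) [CommRing R] [IsLocalRing R]
    (h : ∀ f : R[X], f.Monic → f.Splits) : HenselianLocalRing R where
  is_henselian f hf _ ha _ := (h f hf).exists_isRoot_sub_mem hf ha

theorem IsAlgClosed.of_surjective_of_forall_monic_splits {R K : Type*} [CommRing R] [Field K]
    (i : R →+* K) (hi : Function.Surjective i) (h : ∀ f : R[X], f.Monic → f.Splits) :
    IsAlgClosed K := by
  refine IsAlgClosed.of_exists_root _ fun p hp hirr ↦ ?_
  obtain ⟨q, rfl, -, hq⟩ := lifts_and_degree_eq_and_monic (mem_lifts_of_surjective hi p) hp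
  exact ((h q hq).map i).exists_eval_eq_zero (degree_pos_of_irreducible hirr).ne'

theorem valuation_ring_with_alg_closed_fraction_field_is_strictly_henselian
    (V : Type) [CommRing V] [IsDomain V] [ValuationRing V]
    (halg : IsAlgClosed (FractionRing V)) :
    HenselianLocalRing V ∧ IsAlgClosed (IsLocalRing.ResidueField V) := by
  have hsplits (f : V[X]) (hf : f.Monic) : f.Splits := hf.splits_of_isAlgClosed_fractionRing
  exact ⟨.of_forall_monic_splits V hsplits,
    .of_surjective_of_forall_monic_splits _ IsLocalRing.residue_surjective hsplits⟩
end

section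
/- Let V be a valuation ring whose fraction field is algebraically closed, and let 𝔭 ⊆ V be a prime ideal. Then: (a) the quotient V/𝔭 is a valuation ring whose fraction field is algebraically closed; (b) the localization V_𝔭 of V at 𝔭 is a valuation ring whose fraction field is algebraically closed; and (c) the residue field κ(𝔭) of V at 𝔭 (the residue field of the local ring V_𝔭) is algebraically closed. -/
/-!
A monic lift of a polynomial over the residue field of an integrally closed local domain `R`
has a root in the algebraically closed fraction field of `R`; that root is integral over `R`,
hence lies in `R`, and its residue is a root of the original polynomial. Apply this to `V_𝔭`,
a valuation ring (hence integrally closed) with the same fraction field as `V`. Since `V ⧸ 𝔭`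
is a valuation ring with fraction field `κ(𝔭)`, part (a) follows as well.
-/

/-- A commutative ring is a valuation ring whose fraction field is algebraically
closed. -/
structure IsAlgClosedValuationRing (V : Type) [CommRing V] : Prop where
  [isDomain : IsDomain V]
  [valuationRing : ValuationRing V]
  algClosedFractionField : IsAlgClosed (FractionRing V)

open Polynomial

universe u

theorem IsAlgClosed.fractionRing_of_isFractionRing (R K : Type u) [CommRing R] [IsDomain R]
    [Field K] [Algebra R K] [IsFractionRing R K] [IsAlgClosed K] :
    IsAlgClosed (FractionRing R) :=
  IsAlgClosed.of_ringEquiv K _ (FractionRing.algEquiv R K).symm.toRingEquiv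

theorem ValuationRing.of_isFractionRing_of_isScalarTower (R S K : Type*) [CommRing R] [IsDomain R]
    [ValuationRing R] [CommRing S] [IsDomain S] [Field K] [Algebra R S] [Algebra R K]
    [Algebra S K] [IsScalarTower R S K] [IsFractionRing R K] [IsFractionRing S K] :
    ValuationRing S := by
  rw [ValuationRing.iff_isInteger_or_isInteger S K]
  intro x
  rcases ValuationRing.isInteger_or_isInteger R x with ⟨r, hr⟩ | ⟨r, hr⟩
  · exact Or.inl ⟨algebraMap R S r, by rw [← IsScalarTower.algebraMap_apply, hr]⟩
  · exact Or.inr ⟨algebraMap R S r, by rw [← IsScalarTower.algebraMap_apply, hr]⟩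

theorem IsIntegrallyClosed.exists_isRoot_of_monic {R : Type*} (K : Type*) [CommRing R] [IsDomain R]
    [IsIntegrallyClosed R] [Field K] [Algebra R K] [IsFractionRing R K] [IsAlgClosed K]
    {q : R[X]} (hq : q.Monic) (hdeg : q.degree ≠ 0) : ∃ y : R, q.IsRoot y := by
  have hinj := IsFractionRing.injective R K
  obtain ⟨z, hz⟩ := IsAlgClosed.exists_root (q.map (algebraMap R K))
    (by rwa [degree_map_eq_of_injective hinj])
  have hint : IsIntegral R z := ⟨q, hq, by rwa [eval₂_eq_eval_map]⟩
  obtain ⟨y, rfl⟩ := IsIntegrallyClosed.isIntegral_iff.mp hint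
  refine ⟨y, hinj ?_⟩
  rwa [map_zero, ← eval₂_hom, ← eval_map]

theorem IsAlgClosed.of_surjective_of_exists_isRoot {R k : Type*} [CommRing R] [Field k]
    (f : R →+* k) (hf : Function.Surjective f)
    (h : ∀ q : R[X], q.Monic → q.degree ≠ 0 → ∃ y, q.IsRoot y) : IsAlgClosed k := by
  refine IsAlgClosed.of_exists_root _ fun p hmonic hirr ↦ ?_
  have hlifts : p ∈ lifts f := (lifts_iff_coeff_lifts p).mpr fun _ ↦ hf _
  obtain ⟨q, rfl, hdeg, hq⟩ := lifts_and_degree_eq_and_monic hlifts hmonic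
  obtain ⟨y, hy⟩ := h q hq (hdeg ▸ (degree_pos_of_irreducible hirr).ne')
  exact ⟨f y, by rw [eval_map, eval₂_hom, hy.eq_zero, map_zero]⟩

theorem IsLocalRing.isAlgClosed_residueField_of_isIntegrallyClosed (R K : Type*) [CommRing R]
    [IsDomain R] [IsLocalRing R] [IsIntegrallyClosed R] [Field K] [Algebra R K]
    [IsFractionRing R K] [IsAlgClosed K] : IsAlgClosed (ResidueField R) :=
  .of_surjective_of_exists_isRoot (residue R) residue_surjective
    fun _ ↦ IsIntegrallyClosed.exists_isRoot_of_monic K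

theorem quotient_localization_residue_of_valuation_ring_alg_closed
    (V : Type) [CommRing V] [IsDomain V] [ValuationRing V]
    (halg : IsAlgClosed (FractionRing V)) (𝔭 : Ideal V) [𝔭.IsPrime] :
    IsAlgClosedValuationRing (V ⧸ 𝔭) ∧
    IsAlgClosedValuationRing (Localization.AtPrime 𝔭) ∧
    IsAlgClosed (IsLocalRing.ResidueField (Localization.AtPrime 𝔭)) := by
  have : ValuationRing (V ⧸ 𝔭) :=
    Ideal.Quotient.mk_surjective.valuationRing (Ideal.Quotient.mk 𝔭)
  have : ValuationRing (Localization.AtPrime 𝔭) :=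
    .of_isFractionRing_of_isScalarTower V _ (FractionRing V)
  have hκ : IsAlgClosed 𝔭.ResidueField :=
    IsLocalRing.isAlgClosed_residueField_of_isIntegrallyClosed _ (FractionRing V)
  exact ⟨⟨.fractionRing_of_isFractionRing _ 𝔭.ResidueField⟩,
    ⟨.fractionRing_of_isFractionRing _ (FractionRing V)⟩, hκ⟩
end

section
/- Let R be a commutative ring with an element ϖ ∈ R having bounded ϖ-torsion, and let S be a flat R-algebra. Then S has bounded ϖ-torsion (for the image of ϖ), and the canonical map from S to its ϖ-adic completion Ŝ restricts to a bijection between the ϖ-power-torsion elements of S and the ϖ-power-torsion elements of Ŝ. -/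
/-!
By the equational criterion for flatness, a relation `ϖ ^ k • x = 0` in the flat `R`-module `S`
is a combination of elements of `R` killed by `ϖ ^ k`, hence by `ϖ ^ n`; so `S` inherits the
torsion bound. In a ring with `ϖ`-power torsion killed by `ϖ ^ n`, no nonzero torsion element is
divisible by `ϖ ^ n`, so a torsion element is determined by its residue modulo `ϖ ^ n`: this
gives injectivity into the completion. A torsion element of the completion has, at every level,
a torsion lift (a lift of a deeper component, corrected by a multiple of `ϖ ^ m`); these lifts
all coincide from level `n` on, and the common lift maps onto the given element.
-/

theorem Module.Flat.smul_eq_zero_of_forall_mul_eq_zero {R M : Type*} [CommRing R]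
    [AddCommGroup M] [Module R M] [Module.Flat R M] {a b : R}
    (hab : ∀ r : R, a * r = 0 → b * r = 0) {x : M} (hx : a • x = 0) : b • x = 0 := by
  obtain ⟨k, c, y, hxy, hc⟩ := Module.Flat.isTrivialRelation_of_sum_smul_eq_zero
    (f := fun _ : Unit ↦ a) (x := fun _ ↦ x) (by simpa using hx)
  rw [show x = _ from hxy (), Finset.smul_sum]
  refine Finset.sum_eq_zero fun j _ ↦ ?_
  rw [← mul_smul, hab _ (by simpa using hc j), zero_smul]

def powTorsion {A : Type*} [MonoidWithZero A] (π : A) : Set A := {x | ∃ k : ℕ, π ^ k * x = 0}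

theorem mapsTo_powTorsion {A B F : Type*} [MonoidWithZero A] [MonoidWithZero B] [FunLike F A B]
    [MonoidWithZeroHomClass F A B] (f : F) (π : A) :
    Set.MapsTo f (powTorsion π) (powTorsion (f π)) := by
  rintro x ⟨k, hk⟩
  exact ⟨k, by rw [← map_pow, ← map_mul, hk, map_zero]⟩

theorem Module.Flat.pow_mul_eq_zero_of_mem_powTorsion_algebraMap {R S : Type*} [CommRing R]
    [CommRing S] [Algebra R S] [Module.Flat R S] {ϖ : R} {n : ℕ}
    (hbdd : ∀ r ∈ powTorsion ϖ, ϖ ^ n * r = 0) {x : S}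
    (hx : x ∈ powTorsion (algebraMap R S ϖ)) : algebraMap R S ϖ ^ n * x = 0 := by
  obtain ⟨k, hk⟩ := hx
  have hkx : ϖ ^ k • x = 0 := by rw [Algebra.smul_def, map_pow, hk]
  simpa only [Algebra.smul_def, map_pow] using
    smul_eq_zero_of_forall_mul_eq_zero (fun r hr ↦ hbdd r ⟨k, hr⟩) hkx

theorem eq_zero_of_mem_powTorsion_of_pow_dvd {A : Type*} [CommMonoidWithZero A] {π : A} {n m : ℕ}
    (hbdd : ∀ x ∈ powTorsion π, π ^ n * x = 0) (hnm : n ≤ m) {x : A} (hx : x ∈ powTorsion π)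
    (hdvd : π ^ m ∣ x) : x = 0 := by
  obtain ⟨k, hk⟩ := hx
  obtain ⟨a, rfl⟩ := hdvd
  have ha : π ^ n * a = 0 := hbdd a ⟨k + m, by rw [pow_add, mul_assoc, hk]⟩
  rw [← Nat.sub_add_cancel hnm, pow_add, mul_assoc, ha, mul_zero]

section CommRing

variable {A : Type*} [CommRing A] {π : A}

theorem sub_mem_powTorsion {x y : A} (hx : x ∈ powTorsion π) (hy : y ∈ powTorsion π) :
    x - y ∈ powTorsion π := by
  obtain ⟨k, hk⟩ := hx
  obtain ⟨l, hl⟩ := hy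
  exact ⟨k + l, by linear_combination π ^ l * hk - π ^ k * hl⟩

theorem eq_of_mem_powTorsion_of_pow_dvd_sub {n m : ℕ}
    (hbdd : ∀ x ∈ powTorsion π, π ^ n * x = 0) (hnm : n ≤ m) {x y : A}
    (hx : x ∈ powTorsion π) (hy : y ∈ powTorsion π) (hdvd : π ^ m ∣ x - y) : x = y :=
  sub_eq_zero.mp <| eq_zero_of_mem_powTorsion_of_pow_dvd hbdd hnm (sub_mem_powTorsion hx hy) hdvd

theorem exists_pow_mul_eq_zero_and_pow_dvd_sub {k m : ℕ} {s : A}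
    (hs : π ^ (m + k) ∣ π ^ k * s) : ∃ x, π ^ k * x = 0 ∧ π ^ m ∣ s - x := by
  obtain ⟨t, ht⟩ := hs
  exact ⟨s - π ^ m * t, by linear_combination ht, ⟨t, by ring⟩⟩

end CommRing

theorem AdicCompletion.val_eq_val_of_le {R M : Type*} [CommRing R] [AddCommGroup M]
    [Module R M] {I : Ideal R} {x y : AdicCompletion I M} {m k : ℕ} (hmk : m ≤ k)
    (h : x.val k = y.val k) : x.val m = y.val m := by
  rw [← transitionMap_comp_eval_apply (I := I) (M := M) hmk x,
    ← transitionMap_comp_eval_apply (I := I) (M := M) hmk y, h]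

section AdicCompletion

variable {S : Type*} [CommRing S] {π : S} {n : ℕ}

theorem mk_eq_mk_iff_pow_dvd_sub (π : S) (m : ℕ) (x y : S) :
    (Submodule.Quotient.mk x : S ⧸ (Ideal.span {π} ^ m • ⊤ : Ideal S)) =
      Submodule.Quotient.mk y ↔ π ^ m ∣ x - y := by
  rw [Submodule.Quotient.eq, smul_eq_mul, Ideal.mul_top, Ideal.span_singleton_pow,
    Ideal.mem_span_singleton]

theorem injOn_algebraMap_adicCompletion_powTorsion
    (hbdd : ∀ x ∈ powTorsion π, π ^ n * x = 0) :
    Set.InjOn (algebraMap S (AdicCompletion (Ideal.span {π}) S)) (powTorsion π) :=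
  fun x hx y hy hxy ↦ eq_of_mem_powTorsion_of_pow_dvd_sub hbdd le_rfl hx hy <|
    (mk_eq_mk_iff_pow_dvd_sub π n x y).mp (congr_arg (·.val n) hxy)

theorem exists_mem_powTorsion_mk_eq_val {y : AdicCompletion (Ideal.span {π}) S}
    (hy : y ∈ powTorsion (algebraMap S (AdicCompletion (Ideal.span {π}) S) π)) (m : ℕ) :
    ∃ x ∈ powTorsion π, Submodule.Quotient.mk x = y.val m := by
  obtain ⟨k, hk⟩ := hy
  obtain ⟨s, hs⟩ := Submodule.Quotient.mk_surjective _ (y.val (m + k))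
  have hky : π ^ k • y = 0 := by rw [Algebra.smul_def, map_pow, hk]
  have hks : π ^ (m + k) ∣ π ^ k * s := by
    rw [← sub_zero (π ^ k * s), ← mk_eq_mk_iff_pow_dvd_sub, Submodule.Quotient.mk_zero,
      ← smul_eq_mul, Submodule.Quotient.mk_smul, hs, ← AdicCompletion.val_smul_apply, hky,
      AdicCompletion.val_zero_apply]
  obtain ⟨x, hx, hsx⟩ := exists_pow_mul_eq_zero_and_pow_dvd_sub hks
  refine ⟨x, ⟨k, hx⟩, ?_⟩
  rw [← (mk_eq_mk_iff_pow_dvd_sub π m s x).mpr hsx]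
  exact AdicCompletion.val_eq_val_of_le (x := AdicCompletion.of _ S s) (Nat.le_add_right m k) hs

theorem surjOn_algebraMap_adicCompletion_powTorsion
    (hbdd : ∀ x ∈ powTorsion π, π ^ n * x = 0) :
    Set.SurjOn (algebraMap S (AdicCompletion (Ideal.span {π}) S)) (powTorsion π)
      (powTorsion (algebraMap S (AdicCompletion (Ideal.span {π}) S) π)) := by
  intro y hy
  obtain ⟨x, hx, hxy⟩ := exists_mem_powTorsion_mk_eq_val hy n
  refine ⟨x, hx, AdicCompletion.ext fun m ↦ ?_⟩
  obtain ⟨x', hx', hx'y⟩ := exists_mem_powTorsion_mk_eq_val hy (max m n)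
  have hx'x : x' = x := by
    refine eq_of_mem_powTorsion_of_pow_dvd_sub hbdd le_rfl hx' hx ?_
    rw [← mk_eq_mk_iff_pow_dvd_sub, hxy]
    exact AdicCompletion.val_eq_val_of_le (x := AdicCompletion.of _ S x') (le_max_right m n) hx'y
  subst hx'x
  exact AdicCompletion.val_eq_val_of_le (le_max_left m n) hx'y

theorem bijOn_algebraMap_adicCompletion_powTorsion
    (hbdd : ∀ x ∈ powTorsion π, π ^ n * x = 0) :
    Set.BijOn (algebraMap S (AdicCompletion (Ideal.span {π}) S)) (powTorsion π)
      (powTorsion (algebraMap S (AdicCompletion (Ideal.span {π}) S) π)) :=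
  ⟨mapsTo_powTorsion _ π, injOn_algebraMap_adicCompletion_powTorsion hbdd,
    surjOn_algebraMap_adicCompletion_powTorsion hbdd⟩

end AdicCompletion

theorem flat_bounded_torsion_and_completion_torsion
    (R : Type) [CommRing R] (ϖ : R) (n : ℕ) (hn : 1 ≤ n)
    (hbdd : ∀ x : R, (∃ m : ℕ, ϖ ^ m * x = 0) → ϖ ^ n * x = 0)
    (S : Type) [CommRing S] [Algebra R S] [Module.Flat R S] :
    (∃ m : ℕ, 1 ≤ m ∧ ∀ x : S,
      (∃ k : ℕ, (algebraMap R S ϖ) ^ k * x = 0) → (algebraMap R S ϖ) ^ m * x = 0) ∧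
    Set.BijOn (algebraMap S (AdicCompletion (Ideal.span {algebraMap R S ϖ}) S))
      {x : S | ∃ k : ℕ, (algebraMap R S ϖ) ^ k * x = 0}
      {y : AdicCompletion (Ideal.span {algebraMap R S ϖ}) S |
        ∃ k : ℕ,
          (algebraMap S (AdicCompletion (Ideal.span {algebraMap R S ϖ}) S)
            (algebraMap R S ϖ)) ^ k * y = 0} := by
  have hbddS : ∀ x ∈ powTorsion (algebraMap R S ϖ), algebraMap R S ϖ ^ n * x = 0 :=
    fun _ ↦ Module.Flat.pow_mul_eq_zero_of_mem_powTorsion_algebraMap hbdd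
  exact ⟨⟨n, hn, hbddS⟩, bijOn_algebraMap_adicCompletion_powTorsion hbddS⟩
end

section
/- Let (V_i)_{i∈I} be a family of valuation rings, each having algebraically closed fraction field, and let R := ∏_{i∈I} V_i. Then R has no non-split étale covers: for every étale R-algebra B that is faithfully flat over R, there exists an R-algebra homomorphism B → R (an R-algebra retraction of R → B). -/
/-!
Fix `i` and base change `B` along the projection `∏ V_j → V_i`; a section for every factor
gives a section over the product. So let `V` be a valuation ring with algebraically closed
fraction field `K` and `B` faithfully flat, unramified and essentially of finite type over `V`.
Faithful flatness gives a prime `P` of `B` over the maximal ideal of `V`. The generic fibre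
`K ⊗_V B_P` is nonzero by flatness, and its localization at a maximal ideal is unramified and
essentially of finite type over the algebraically closed field `K`, hence equal to `K`. This
yields a `V`-algebra map `B_P → K`, which lands in `V` because `B_P` dominates `V` and valuation
rings are maximal for domination.
-/

open TensorProduct IsLocalRing

theorem Algebra.FormallyUnramified.nonempty_algHom_of_isAlgClosed (K A : Type*) [Field K]
    [IsAlgClosed K] [CommRing A] [Nontrivial A] [Algebra K A] [Algebra.FormallyUnramified K A]
    [Algebra.EssFiniteType K A] : Nonempty (A →ₐ[K] K) := by
  obtain ⟨m, hm⟩ := Ideal.exists_maximal A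
  have bij := bijective_of_isAlgClosed_of_isLocalRing K (Localization.AtPrime m)
  exact ⟨((AlgEquiv.ofBijective (Algebra.ofId K _) bij).symm : _ →ₐ[K] K).comp
    (IsScalarTower.toAlgHom K A (Localization.AtPrime m))⟩

theorem Algebra.FormallyUnramified.nonempty_algHom_fractionRing_of_flat (V S : Type*)
    [CommRing V] [IsDomain V] [IsAlgClosed (FractionRing V)] [CommRing S] [Nontrivial S]
    [Algebra V S] [Module.Flat V S] [Algebra.FormallyUnramified V S] [Algebra.EssFiniteType V S] :
    Nonempty (S →ₐ[V] FractionRing V) := by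
  have : Nontrivial (FractionRing V ⊗[V] S) :=
    (Algebra.TensorProduct.includeRight_injective (IsFractionRing.injective V _)).nontrivial
  obtain ⟨φ⟩ := nonempty_algHom_of_isAlgClosed (FractionRing V) (FractionRing V ⊗[V] S)
  exact ⟨(φ.restrictScalars V).comp Algebra.TensorProduct.includeRight⟩

theorem isLocalHom_algebraMap_localization_atPrime {R S : Type*} [CommRing R] [IsLocalRing R]
    [CommRing S] [Algebra R S] (P : Ideal S) [P.IsPrime] [P.LiesOver (maximalIdeal R)] :
    IsLocalHom (algebraMap R (Localization.AtPrime P)) := by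
  refine ⟨fun r hr => of_not_not fun hr' => ?_⟩
  have hrP : algebraMap R S r ∈ P := by
    rw [← Ideal.mem_comap, ← Ideal.under_def, ← P.over_def (maximalIdeal R)]
    exact (mem_maximalIdeal r).mpr hr'
  rw [IsScalarTower.algebraMap_apply R S, IsLocalization.AtPrime.isUnit_to_map_iff _ P] at hr
  exact hr hrP

namespace ValuationRing

variable {V S : Type*} [CommRing V] [IsDomain V] [ValuationRing V] [CommRing S] [IsLocalRing S]
  [Algebra V S] [IsLocalHom (algebraMap V S)]

theorem algHom_apply_mem_range_of_isLocalHom (φ : S →ₐ[V] FractionRing V) (s : S) :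
    φ s ∈ (algebraMap V (FractionRing V)).range := by
  obtain h | ⟨v, hv⟩ := isInteger_or_isInteger V (φ s)
  · exact h
  by_cases hs : φ s = 0
  · exact hs ▸ zero_mem _
  by_cases hvu : IsUnit v
  · exact ⟨↑hvu.unit⁻¹, by rw [map_units_inv, IsUnit.unit_spec, hv, inv_inv]⟩
  · have hφ : φ (1 - s * algebraMap V S v) = 0 := by
      rw [map_sub, map_one, map_mul, AlgHom.commutes, hv, mul_inv_cancel₀ hs, sub_self]
    have hu : IsUnit (1 - s * algebraMap V S v) :=
      (isUnit_or_isUnit_one_sub_self _).resolve_left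
        fun h => hvu (isUnit_of_map_unit (algebraMap V S) v (isUnit_of_mul_isUnit_right h))
    exact absurd hφ (hu.map φ).ne_zero

noncomputable def algHomOfIsLocalHom (φ : S →ₐ[V] FractionRing V) : S →ₐ[V] V :=
  (Algebra.botEquivOfInjective (IsFractionRing.injective V (FractionRing V))).toAlgHom.comp
    (φ.codRestrict ⊥ (algHom_apply_mem_range_of_isLocalHom φ))

end ValuationRing

theorem ValuationRing.nonempty_algHom_of_faithfullyFlat (V B : Type*) [CommRing V] [IsDomain V]
    [ValuationRing V] [IsAlgClosed (FractionRing V)] [CommRing B] [Algebra V B]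
    [Module.FaithfullyFlat V B] [Algebra.FormallyUnramified V B] [Algebra.EssFiniteType V B] :
    Nonempty (B →ₐ[V] V) := by
  obtain ⟨P, _, _⟩ := Ideal.exists_isPrime_liesOver_of_faithfullyFlat (B := B) (maximalIdeal V)
  have := isLocalHom_algebraMap_localization_atPrime (R := V) P
  obtain ⟨φ⟩ :=
    Algebra.FormallyUnramified.nonempty_algHom_fractionRing_of_flat V (Localization.AtPrime P)
  exact ⟨(algHomOfIsLocalHom φ).comp (IsScalarTower.toAlgHom V B _)⟩

theorem product_of_valuation_rings_has_no_nonsplit_etale_covers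
    (I : Type) (V : I → Type) [∀ i, CommRing (V i)] [∀ i, IsDomain (V i)]
    [∀ i, ValuationRing (V i)] (halg : ∀ i, IsAlgClosed (FractionRing (V i)))
    (B : Type) [CommRing B] [Algebra (∀ i, V i) B]
    [Algebra.Etale (∀ i, V i) B] [Module.FaithfullyFlat (∀ i, V i) B] :
    Nonempty (B →ₐ[∀ i, V i] (∀ i, V i)) := by
  let (i : I) : Algebra (∀ j, V j) (V i) := (Pi.evalRingHom V i).toAlgebra
  have hsplit (i : I) : Nonempty (V i ⊗[∀ j, V j] B →ₐ[V i] V i) :=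
    have := halg i
    ValuationRing.nonempty_algHom_of_faithfullyFlat (V i) _
  exact ⟨AlgHom.pi fun i =>
    ((hsplit i).some.restrictScalars (∀ j, V j)).comp Algebra.TensorProduct.includeRight⟩
end

section
/- Let p be a prime and let (A, ϖ) be a perfectoid ring with tilt A♭. Then there is a bijection ι from the set of idempotent elements of A to the set of idempotent elements of A♭ such that ι(0) = 0, ι(1) = 1, ι(e·f) = ι(e)·ι(f) for all idempotents e, f, and such that for every idempotent e of A, the zeroth component (Perfection.coeff 0) of ι(e) in A/pA equals the image of e in A/pA. -/
/-- The set of idempotent elements of a commutative ring. -/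
def Idem (R : Type) [CommRing R] : Type := { e : R // e * e = e }

open Polynomial

theorem IsIdempotentElem.eq_of_sub_mem_jacobson {R : Type*} [CommRing R] {e f : R}
    (he : IsIdempotentElem e) (hf : IsIdempotentElem f) (h : e - f ∈ Ring.jacobson R) :
    e = f := by
  have hcube : (e - f) * (1 - (e - f) ^ 2) = 0 := by
    linear_combination (3 * f - e - 1) * he.eq + (f + 1 - 3 * e) * hf.eq
  have hunit : IsUnit (1 - (e - f) ^ 2) := by
    rw [← Ideal.jacobson_bot, Ideal.mem_jacobson_bot] at h
    convert h (-(e - f)) using 1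
    ring
  exact sub_eq_zero.1 (hunit.mul_left_eq_zero.1 hcube)

theorem HenselianRing.exists_isIdempotentElem_sub_mem {R : Type*} [CommRing R] {I : Ideal R}
    [HenselianRing R I] {a : R} (ha : a * a - a ∈ I) :
    ∃ e : R, IsIdempotentElem e ∧ e - a ∈ I := by
  have hunit : IsUnit (Ideal.Quotient.mk I (2 * a - 1)) := by
    refine IsUnit.of_mul_eq_one (Ideal.Quotient.mk I (2 * a - 1)) ?_
    rw [← map_mul, ← map_one (Ideal.Quotient.mk I), Ideal.Quotient.eq]
    -- `(2a - 1)² = 1 + 4 (a² - a)`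
    convert I.mul_mem_left 4 ha using 1
    ring
  have hmonic : (X * X - X : R[X]).Monic := by
    simpa [sq] using
      monic_X_pow_sub (R := R) (n := 2) (p := X) (degree_X_le.trans_lt (by norm_num))
  obtain ⟨e, he, hea⟩ := HenselianRing.is_henselian (X * X - X) hmonic a
    (by simpa using ha) (by simpa [two_mul] using hunit)
  exact ⟨e, sub_eq_zero.1 (by simpa using he), hea⟩

theorem Perfection.coeff_eq_coeff_zero_of_isIdempotentElem {R : Type*} [CommSemiring R] {p : ℕ}
    [Fact p.Prime] [CharP R p] {x : Perfection R p} (hx : IsIdempotentElem x) (n : ℕ) :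
    coeff R p n x = coeff R p 0 x := by
  induction n with
  | zero => rfl
  | succ n ih =>
    rw [← ih, ← coeff_pow_p' x n,
      (hx.map (coeff R p (n + 1))).pow_eq (Fact.out : p.Prime).ne_zero]

namespace Idem

variable {R S : Type} [CommRing R] [CommRing S]

def map (f : R →+* S) (e : Idem R) : Idem S :=
  ⟨f e.1, by rw [← map_mul, e.2]⟩

theorem map_quotientMk_bijective {I J : Ideal R} [HenselianRing R J] (hIJ : I ≤ J) :
    Function.Bijective (map (Ideal.Quotient.mk I)) := by
  have hJ : J ≤ Ring.jacobson R := Ideal.jacobson_bot (R := R) ▸ HenselianRing.jac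
  constructor
  · intro e f hef
    have hsub : e.1 - f.1 ∈ I := Ideal.Quotient.eq.1 (congrArg Subtype.val hef)
    exact Subtype.ext (IsIdempotentElem.eq_of_sub_mem_jacobson e.2 f.2 (hJ (hIJ hsub)))
  · rintro ⟨x, hx⟩
    obtain ⟨a, rfl⟩ := Ideal.Quotient.mk_surjective x
    have ha : a * a - a ∈ J := hIJ (Ideal.Quotient.eq.1 (by rwa [map_mul]))
    obtain ⟨e, he, hea⟩ := HenselianRing.exists_isIdempotentElem_sub_mem ha
    refine ⟨⟨e, he⟩, Subtype.ext (IsIdempotentElem.eq_of_sub_mem_jacobson (he.map _) hx ?_)⟩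
    have hmk := Ring.le_comap_jacobson (Ideal.Quotient.mk I) (hJ hea)
    rwa [Ideal.mem_comap, map_sub] at hmk

def perfectionEquiv (R : Type) [CommRing R] (p : ℕ) [Fact p.Prime] [CharP R p] :
    Idem R ≃ Idem (Perfection R p) where
  toFun e :=
    ⟨⟨fun _ => e.1, fun _ => IsIdempotentElem.pow_eq e.2 (Fact.out : p.Prime).ne_zero⟩,
      Perfection.ext fun _ => e.2⟩
  invFun := map (Perfection.coeff R p 0)
  left_inv _ := rfl
  right_inv x := Subtype.ext <| Perfection.ext fun n =>
    (Perfection.coeff_eq_coeff_zero_of_isIdempotentElem x.2 n).symm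

end Idem

theorem idempotents_of_perfectoid_and_tilt
    (p : ℕ) [Fact p.Prime] (A : Type) [CommRing A] (ϖ : A)
    [CharP (A ⧸ Ideal.span {(p : A)}) p]
    (hA : IsPerfectoid p A ϖ) :
    ∃ ι : Idem A ≃ Idem (Perfection (A ⧸ Ideal.span {(p : A)}) p),
      (ι ⟨0, by ring⟩).1 = 0 ∧
      (ι ⟨1, by ring⟩).1 = 1 ∧
      (∀ e f : Idem A,
        (ι ⟨e.1 * f.1, by rw [mul_mul_mul_comm, e.2, f.2]⟩).1 = (ι e).1 * (ι f).1) ∧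
      ∀ e : Idem A,
        Perfection.coeff (A ⧸ Ideal.span {(p : A)}) p 0 (ι e).1 =
          Ideal.Quotient.mk (Ideal.span {(p : A)}) e.1 := by
  have := hA.complete
  have hpϖ : Ideal.span {(p : A)} ≤ Ideal.span {ϖ} :=
    Ideal.span_singleton_le_span_singleton.2 <|
      (dvd_pow_self ϖ (Fact.out : p.Prime).ne_zero).trans hA.pow_dvd
  let mk := Ideal.Quotient.mk (Ideal.span {(p : A)})
  refine ⟨(Equiv.ofBijective _ (Idem.map_quotientMk_bijective hpϖ)).trans
      (Idem.perfectionEquiv _ p),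
    Perfection.ext fun _ => map_zero mk, Perfection.ext fun _ => map_one mk,
    fun e f => Perfection.ext fun _ => map_mul mk e.1 f.1, fun _ => rfl⟩
end
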